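/- Let k be a field and q ∈ k nonzero, char k = 0. The linear map λ : k[X] ⊗ kℤ → k determined by λ(Xᵐ, gᵗ) = tᵐ (with the convention t⁰ = 1 even for t = 0) is a skew pairing between the polynomial Hopf algebra k[X] (with X primitive) and the group Hopf algebra kℤ. -/

import Mathlib

open TensorProduct Coalgebra LinearMap Finset HopfAlgebra

noncomputable section

variable {k : Type} [Field k]

/-- Representations of `comul a` with index type in `Type 0`. -/
structure Repr0 (k : Type) [CommSemiring k] {A : Type} [AddCommMonoid A] [Module k A]
    [CoalgebraStruct k A] (a : A) where
  {ι : Type}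
  index : Finset ι
  left : ι → A
  right : ι → A
  eq : ∑ i ∈ index, left i ⊗ₜ[k] right i = CoalgebraStruct.comul a

/-- A skew pairing `λ : A ⊗ H → k` (given as a bilinear map), satisfying (BR1)–(BR4),
with Sweedler sums expressed via arbitrary representations of the comultiplication. -/
structure IsSkewPairing {A H : Type} [Ring A] [Ring H]
    [Bialgebra k A] [Bialgebra k H] (lam : A →ₗ[k] H →ₗ[k] k) : Prop where
  br1 : ∀ (x y : A) (z : H) (rz : Repr0 k z),
    lam (x * y) z = ∑ i ∈ rz.index, lam x (rz.left i) * lam y (rz.right i)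
  br2 : ∀ z : H, lam 1 z = counit (R := k) z
  br3 : ∀ (x : A) (l z : H) (rx : Repr0 k x),
    lam x (l * z) = ∑ i ∈ rx.index, lam (rx.left i) z * lam (rx.right i) l
  br4 : ∀ y : A, lam y 1 = counit (R := k) y

/-- A coquasitriangular (braided) structure on a bialgebra `H` : (BR1)–(BR5). -/
structure IsCQT {H : Type} [Ring H] [Bialgebra k H]
    (p : H →ₗ[k] H →ₗ[k] k) : Prop extends IsSkewPairing p where
  br5 : ∀ (x y : H) (rx : Repr0 k x) (ry : Repr0 k y),
    ∑ i ∈ rx.index, ∑ j ∈ ry.index, p (rx.left i) (ry.left j) • (rx.right i * ry.right j)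
    = ∑ i ∈ rx.index, ∑ j ∈ ry.index, p (rx.right i) (ry.right j) • (ry.left j * rx.left i)

/-- Coquasitriangularity (BR1)–(BR5) for a coalgebra `D` equipped with a (not necessarily
associative, not necessarily typeclass-registered) multiplication `mul` and unit `one`. -/
structure IsCQTMul {D : Type} [AddCommGroup D] [Module k D] [Coalgebra k D]
    (mul : D →ₗ[k] D →ₗ[k] D) (one : D) (σ : D →ₗ[k] D →ₗ[k] k) : Prop where
  br1 : ∀ (x y z : D) (rz : Repr0 k z),
    σ (mul x y) z = ∑ i ∈ rz.index, σ x (rz.left i) * σ y (rz.right i)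
  br2 : ∀ z : D, σ one z = counit (R := k) z
  br3 : ∀ (x l z : D) (rx : Repr0 k x),
    σ x (mul l z) = ∑ i ∈ rx.index, σ (rx.left i) z * σ (rx.right i) l
  br4 : ∀ y : D, σ y one = counit (R := k) y
  br5 : ∀ (x y : D) (rx : Repr0 k x) (ry : Repr0 k y),
    ∑ i ∈ rx.index, ∑ j ∈ ry.index, σ (rx.left i) (ry.left j) • mul (rx.right i) (ry.right j)
    = ∑ i ∈ rx.index, ∑ j ∈ ry.index, σ (rx.right i) (ry.right j) • mul (ry.left j) (rx.left i)

/-- A matched pair of bialgebras `(A, H, ⊳, ⊲)` : `lact = ⊳ : H ⊗ A → A` is a left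
`H`-module coalgebra structure, `ract = ⊲ : H ⊗ A → H` is a right `A`-module coalgebra
structure, together with the matched pair compatibility conditions. -/
structure IsMatchedPair {A H : Type} [Ring A] [Ring H] [Bialgebra k A] [Bialgebra k H]
    (lact : H →ₗ[k] A →ₗ[k] A) (ract : H →ₗ[k] A →ₗ[k] H) : Prop where
  ract_unit : ∀ h : H, ract h 1 = h
  ract_act : ∀ (h : H) (a b : A), ract h (a * b) = ract (ract h a) b
  ract_comul : ∀ (h : H) (a : A) (rh : Repr0 k h) (ra : Repr0 k a),
    comul (R := k) (ract h a)
      = ∑ i ∈ rh.index, ∑ j ∈ ra.index,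
          ract (rh.left i) (ra.left j) ⊗ₜ[k] ract (rh.right i) (ra.right j)
  ract_counit : ∀ (h : H) (a : A),
    counit (R := k) (ract h a) = counit (R := k) h * counit (R := k) a
  lact_unit : ∀ a : A, lact 1 a = a
  lact_act : ∀ (g h : H) (a : A), lact (g * h) a = lact g (lact h a)
  lact_comul : ∀ (h : H) (a : A) (rh : Repr0 k h) (ra : Repr0 k a),
    comul (R := k) (lact h a)
      = ∑ i ∈ rh.index, ∑ j ∈ ra.index,
          lact (rh.left i) (ra.left j) ⊗ₜ[k] lact (rh.right i) (ra.right j)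
  lact_counit : ∀ (h : H) (a : A),
    counit (R := k) (lact h a) = counit (R := k) h * counit (R := k) a
  lact_mul : ∀ (h : H) (a b : A) (rh : Repr0 k h) (ra : Repr0 k a),
    lact h (a * b) = ∑ i ∈ rh.index, ∑ j ∈ ra.index,
      lact (rh.left i) (ra.left j) * lact (ract (rh.right i) (ra.right j)) b
  mul_ract : ∀ (g h : H) (a : A) (rh : Repr0 k h) (ra : Repr0 k a),
    ract (g * h) a = ∑ i ∈ rh.index, ∑ j ∈ ra.index,
      ract g (lact (rh.left i) (ra.left j)) * ract (rh.right i) (ra.right j)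
  lact_one : ∀ h : H, lact h 1 = counit (R := k) h • (1 : A)
  one_ract : ∀ a : A, ract 1 a = counit (R := k) a • (1 : H)
  sym : ∀ (h : H) (a : A) (rh : Repr0 k h) (ra : Repr0 k a),
    ∑ i ∈ rh.index, ∑ j ∈ ra.index,
        ract (rh.left i) (ra.left j) ⊗ₜ[k] lact (rh.right i) (ra.right j)
    = ∑ i ∈ rh.index, ∑ j ∈ ra.index,
        ract (rh.right i) (ra.right j) ⊗ₜ[k] lact (rh.left i) (ra.left j)

/-- `mulD` is the double cross product multiplication
`(a ⊗ h)(b ⊗ g) = a(h₍₁₎ ⊳ b₍₁₎) ⊗ (h₍₂₎ ⊲ b₍₂₎)g` on `A ⊗ H`. -/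
def IsDCPMul {A H : Type} [Ring A] [Ring H] [Bialgebra k A] [Bialgebra k H]
    (lact : H →ₗ[k] A →ₗ[k] A) (ract : H →ₗ[k] A →ₗ[k] H)
    (mulD : A ⊗[k] H →ₗ[k] A ⊗[k] H →ₗ[k] A ⊗[k] H) : Prop :=
  ∀ (a b : A) (h g : H) (rh : Repr0 k h) (rb : Repr0 k b),
    mulD (a ⊗ₜ[k] h) (b ⊗ₜ[k] g) = ∑ i ∈ rh.index, ∑ j ∈ rb.index,
      (a * lact (rh.left i) (rb.left j)) ⊗ₜ[k] (ract (rh.right i) (rb.right j) * g)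

/-- The right action `h ⊲ a = h₍₂₎ λ⁻¹(h₍₁₎, a₍₁₎) λ(h₍₃₎, a₍₂₎)` induced by
a skew pairing `λ : H ⊗ A → k` (where `λ⁻¹ = λ ∘ (S_H ⊗ id)`). -/
def IsQDRact {A H : Type} [Ring A] [Ring H] [HopfAlgebra k A] [HopfAlgebra k H]
    (lam : H →ₗ[k] A →ₗ[k] k) (ract : H →ₗ[k] A →ₗ[k] H) : Prop :=
  ∀ (h : H) (a : A) (rh : Repr0 k h)
    (rh1 : ∀ i : rh.ι, Repr0 k (rh.left i)) (ra : Repr0 k a),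
    ract h a = ∑ i ∈ rh.index, ∑ j ∈ (rh1 i).index, ∑ l ∈ ra.index,
      (lam (antipode (R := k) ((rh1 i).left j)) (ra.left l) * lam (rh.right i) (ra.right l))
        • (rh1 i).right j

/-- The left action `h ⊳ a = a₍₂₎ λ⁻¹(h₍₁₎, a₍₁₎) λ(h₍₂₎, a₍₃₎)` induced by
a skew pairing `λ : H ⊗ A → k`. -/
def IsQDLact {A H : Type} [Ring A] [Ring H] [HopfAlgebra k A] [HopfAlgebra k H]
    (lam : H →ₗ[k] A →ₗ[k] k) (lact : H →ₗ[k] A →ₗ[k] A) : Prop :=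
  ∀ (h : H) (a : A) (rh : Repr0 k h) (ra : Repr0 k a)
    (ra1 : ∀ l : ra.ι, Repr0 k (ra.left l)),
    lact h a = ∑ i ∈ rh.index, ∑ l ∈ ra.index, ∑ j ∈ (ra1 l).index,
      (lam (antipode (R := k) (rh.left i)) ((ra1 l).left j) * lam (rh.right i) (ra.right l))
        • (ra1 l).right j

/-- `σ(a ⊗ h, b ⊗ g) = u(a₍₁₎, g₍₁₎) p(a₍₂₎, b₍₁₎) τ(h₍₁₎, g₍₂₎) v(h₍₂₎, b₍₂₎)`. -/
def IsSigma {A H : Type} [Ring A] [Ring H] [Bialgebra k A] [Bialgebra k H]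
    (u : A →ₗ[k] H →ₗ[k] k) (p : A →ₗ[k] A →ₗ[k] k)
    (τ : H →ₗ[k] H →ₗ[k] k) (v : H →ₗ[k] A →ₗ[k] k)
    (σ : A ⊗[k] H →ₗ[k] A ⊗[k] H →ₗ[k] k) : Prop :=
  ∀ (a b : A) (h g : H) (ra : Repr0 k a) (rb : Repr0 k b)
    (rh : Repr0 k h) (rg : Repr0 k g),
    σ (a ⊗ₜ[k] h) (b ⊗ₜ[k] g) = ∑ m ∈ ra.index, ∑ n ∈ rb.index, ∑ i ∈ rh.index, ∑ j ∈ rg.index,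
      u (ra.left m) (rg.left j) * p (ra.right m) (rb.left n)
        * τ (rh.left i) (rg.right j) * v (rh.right i) (rb.right n)


/-! On the bases `xᵐ` and `gᵗ` the pairing reads `λ(p, gᵗ) = p(t)`, evaluation of the
polynomial `p` at the integer `t`. All four axioms are linear in each argument, so they only
need checking on basis elements. As `gᵗ` is group-like, (BR1) says that evaluation at `t` is
multiplicative and (BR2) that `1(t) = 1 = ε(gᵗ)`; (BR4) says that evaluation at `0` is the
counit, true as `ε(x) = 0`. Finally (BR3) on `xᵐ`, `gˢ`, `gᵗ` is the binomial theorem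
`(s + t)ᵐ = ∑ⱼ C(m, j) tʲ s^{m-j}`, matching `Δ(xᵐ) = ∑ⱼ C(m, j) xʲ ⊗ x^{m-j}` for the
primitive `x`. -/

lemma Repr0.sum_eq_lift {R A M : Type} [CommSemiring R] [AddCommMonoid A] [Module R A]
    [CoalgebraStruct R A] [AddCommMonoid M] [Module R M] {a : A} (r : Repr0 R a)
    (f : A →ₗ[R] A →ₗ[R] M) :
    ∑ i ∈ r.index, f (r.left i) (r.right i) = TensorProduct.lift f (comul (R := R) a) := by
  rw [← r.eq, map_sum]
  simp only [TensorProduct.lift.tmul]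

lemma IsGroupLikeElem.units_zpow {R A : Type} [CommSemiring R] [Semiring A] [Bialgebra R A]
    {u : Aˣ} (hu : IsGroupLikeElem R (u : A)) (t : ℤ) :
    IsGroupLikeElem R ((u ^ t : Aˣ) : A) := by
  cases t with
  | ofNat n =>
    simpa only [Int.ofNat_eq_natCast, zpow_natCast, Units.val_pow_eq_pow_val] using hu.pow
  | negSucc n =>
    rw [zpow_negSucc]
    exact (Units.val_pow_eq_pow_val u (n + 1) ▸ hu.pow).unitsInv

lemma comul_pow_of_comul_eq_add {R A : Type} [CommSemiring R] [CommSemiring A] [Bialgebra R A]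
    {x : A} (hx : comul (R := R) x = x ⊗ₜ[R] 1 + 1 ⊗ₜ[R] x) (m : ℕ) :
    comul (R := R) (x ^ m)
      = ∑ j ∈ range (m + 1), m.choose j • ((x ^ j) ⊗ₜ[R] (x ^ (m - j))) := by
  rw [← Bialgebra.comulAlgHom_apply R, map_pow, Bialgebra.comulAlgHom_apply, hx, add_pow]
  refine sum_congr rfl fun j _ => ?_
  rw [Algebra.TensorProduct.tmul_pow, Algebra.TensorProduct.tmul_pow,
    Algebra.TensorProduct.tmul_mul_tmul, one_pow, one_pow, mul_one, one_mul, mul_comm,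
    ← nsmul_eq_mul]

lemma LinearMap.map_mul_of_map_mul_basis {R A ι : Type} [CommSemiring R] [Semiring A]
    [Algebra R A] (b : Module.Basis ι R A) (f : A →ₗ[R] R)
    (h : ∀ i j, f (b i * b j) = f (b i) * f (b j)) (a a' : A) : f (a * a') = f a * f a' := by
  have : (LinearMap.mul R A).compr₂ f = (LinearMap.mul R R).compl₁₂ f f :=
    LinearMap.ext_basis b b h
  exact LinearMap.congr_fun₂ this a a'

section PolynomialGroupPairing

variable {k P C : Type} [CommRing k] [CommRing P] [Bialgebra k P] [CommRing C] [Bialgebra k C]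
  {x : P} {g : Cˣ} {lam : P →ₗ[k] C →ₗ[k] k}
  (hlam : ∀ (m : ℕ) (t : ℤ), lam (x ^ m) ((g ^ t : Cˣ) : C) = (t : k) ^ m)
include hlam

lemma pairing_mul_zpow (BP : Module.Basis ℕ k P) (hBP : ∀ n : ℕ, BP n = x ^ n)
    (a b : P) (t : ℤ) :
    lam (a * b) ((g ^ t : Cˣ) : C) = lam a ((g ^ t : Cˣ) : C) * lam b ((g ^ t : Cˣ) : C) :=
  (lam.flip _).map_mul_of_map_mul_basis BP
    (fun m n => by simp only [hBP, flip_apply, ← pow_add, hlam]) a b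

lemma pairing_pow_mul (BC : Module.Basis ℤ k C) (hBC : ∀ t : ℤ, BC t = ((g ^ t : Cˣ) : C))
    (m : ℕ) (l z : C) :
    lam (x ^ m) (l * z)
      = ∑ j ∈ range (m + 1), (m.choose j : k) * (lam (x ^ j) z * lam (x ^ (m - j)) l) := by
  have : (LinearMap.mul k C).compr₂ (lam (x ^ m)) = ∑ j ∈ range (m + 1),
      (m.choose j : k) •
        ((LinearMap.mul k k).compl₁₂ (lam (x ^ j)) (lam (x ^ (m - j)))).flip := by
    refine LinearMap.ext_basis BC BC fun s t => ?_
    simp only [hBC, compr₂_apply, mul_apply', LinearMap.sum_apply, LinearMap.smul_apply,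
      flip_apply, compl₁₂_apply, smul_eq_mul, ← Units.val_mul, ← zpow_add, hlam]
    rw [Int.cast_add, add_comm, add_pow]
    exact sum_congr rfl fun j _ => by ring
  simpa using LinearMap.congr_fun₂ this l z

lemma pairing_mul_left_eq_lift_comul (hg : IsGroupLikeElem k (g : C))
    (BP : Module.Basis ℕ k P) (hBP : ∀ n : ℕ, BP n = x ^ n)
    (BC : Module.Basis ℤ k C) (hBC : ∀ t : ℤ, BC t = ((g ^ t : Cˣ) : C)) (a b : P) (z : C) :
    lam (a * b) z = lift ((LinearMap.mul k k).compl₁₂ (lam a) (lam b)) (comul (R := k) z) := by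
  suffices h : lam (a * b)
      = (lift ((LinearMap.mul k k).compl₁₂ (lam a) (lam b))).comp comul from
    LinearMap.congr_fun h z
  refine BC.ext fun t => ?_
  rw [hBC, comp_apply, (hg.units_zpow t).comul_eq_tmul_self, lift.tmul]
  exact pairing_mul_zpow hlam BP hBP a b t

lemma pairing_one_left (hg : IsGroupLikeElem k (g : C))
    (BC : Module.Basis ℤ k C) (hBC : ∀ t : ℤ, BC t = ((g ^ t : Cˣ) : C)) (z : C) :
    lam 1 z = counit (R := k) z := by
  refine LinearMap.congr_fun (BC.ext (f₁ := lam 1) (f₂ := counit) fun t => ?_) z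
  rw [hBC, (hg.units_zpow t).counit_eq_one, ← pow_zero x, hlam, pow_zero]

lemma pairing_mul_right_eq_lift_comul (hx : comul (R := k) x = x ⊗ₜ[k] 1 + 1 ⊗ₜ[k] x)
    (BP : Module.Basis ℕ k P) (hBP : ∀ n : ℕ, BP n = x ^ n)
    (BC : Module.Basis ℤ k C) (hBC : ∀ t : ℤ, BC t = ((g ^ t : Cˣ) : C)) (a : P) (l z : C) :
    lam a (l * z)
      = lift ((LinearMap.mul k k).compl₁₂ (lam.flip z) (lam.flip l)) (comul (R := k) a) := by
  suffices h : lam.flip (l * z)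
      = (lift ((LinearMap.mul k k).compl₁₂ (lam.flip z) (lam.flip l))).comp comul from
    LinearMap.congr_fun h a
  refine BP.ext fun m => ?_
  rw [hBP, comp_apply, comul_pow_of_comul_eq_add hx, map_sum, flip_apply,
    pairing_pow_mul hlam BC hBC]
  refine sum_congr rfl fun j _ => ?_
  rw [map_nsmul, lift.tmul, nsmul_eq_mul]
  rfl

lemma pairing_one_right (hx : counit (R := k) x = 0)
    (BP : Module.Basis ℕ k P) (hBP : ∀ n : ℕ, BP n = x ^ n) (a : P) :
    lam a 1 = counit (R := k) a := by
  refine LinearMap.congr_fun (BP.ext (f₁ := lam.flip 1) (f₂ := counit) fun m => ?_) a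
  rw [hBP, flip_apply, ← Units.val_one, ← zpow_zero g, hlam, ← Bialgebra.counitAlgHom_apply k,
    map_pow, Bialgebra.counitAlgHom_apply, hx, Int.cast_zero]

end PolynomialGroupPairing

theorem polynomial_group_algebra_skew_pairing_general {k P C : Type} [Field k]
    [CommRing P] [HopfAlgebra k P] [CommRing C] [HopfAlgebra k C]
    (x : P) (hxΔ : comul (R := k) x = x ⊗ₜ[k] 1 + 1 ⊗ₜ[k] x)
    (hxε : counit (R := k) x = 0)
    (BP : Module.Basis ℕ k P) (hBP : ∀ n : ℕ, BP n = x ^ n)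
    (g : Cˣ) (hgΔ : comul (R := k) (g : C) = (g : C) ⊗ₜ[k] (g : C))
    (hgε : counit (R := k) (g : C) = 1)
    (BC : Module.Basis ℤ k C) (hBC : ∀ t : ℤ, BC t = ((g ^ t : Cˣ) : C))
    (lam : P →ₗ[k] C →ₗ[k] k)
    (hlam : ∀ (m : ℕ) (t : ℤ), lam (x ^ m) ((g ^ t : Cˣ) : C) = (t : k) ^ m) :
    IsSkewPairing lam := by
  have hg : IsGroupLikeElem k (g : C) := ⟨hgε, hgΔ⟩
  exact
    { br1 := fun a b z rz =>
        (pairing_mul_left_eq_lift_comul hlam hg BP hBP BC hBC a b z).trans (rz.sum_eq_lift _).symm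
      br2 := pairing_one_left hlam hg BC hBC
      br3 := fun a l z ra =>
        (pairing_mul_right_eq_lift_comul hlam hxΔ BP hBP BC hBC a l z).trans
          (ra.sum_eq_lift _).symm
      br4 := pairing_one_right hlam hxε BP hBP }

/-- `λ(Xᵐ, gᵗ) = tᵐ` is a skew pairing between the polynomial Hopf
algebra `k[X]` (with `X` primitive) and the group Hopf algebra `kℤ`. -/
theorem polynomial_group_algebra_skew_pairing {k P C : Type} [Field k] [CharZero k]
    [CommRing P] [HopfAlgebra k P] [CommRing C] [HopfAlgebra k C]
    (q : k) (hq : q ≠ 0)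
    (x : P) (hxΔ : comul (R := k) x = x ⊗ₜ[k] 1 + 1 ⊗ₜ[k] x)
    (hxε : counit (R := k) x = 0)
    (BP : Module.Basis ℕ k P) (hBP : ∀ n : ℕ, BP n = x ^ n)
    (g : Cˣ) (hgΔ : comul (R := k) (g : C) = (g : C) ⊗ₜ[k] (g : C))
    (hgε : counit (R := k) (g : C) = 1)
    (BC : Module.Basis ℤ k C) (hBC : ∀ t : ℤ, BC t = ((g ^ t : Cˣ) : C))
    (lam : P →ₗ[k] C →ₗ[k] k)
    (hlam : ∀ (m : ℕ) (t : ℤ), lam (x ^ m) ((g ^ t : Cˣ) : C) = (t : k) ^ m) :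
    IsSkewPairing lam :=
  polynomial_group_algebra_skew_pairing_general x hxΔ hxε BP hBP g hgΔ hgε BC hBC lam hlam

end
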